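/- If the preconditions of the states of an action model E have extensions that partition the agent set A of threshold model M, and the relation R of E is the full relation on |E|, then the product update M ⊗ E is network-isomorphic to M via the map a ↦ (a, σ_a), where σ_a is the unique state whose precondition a satisfies. -/

import Mathlib

open Finset
open scoped Classical

variable {α : Type*}

noncomputable def nbhd [Fintype α] (N : α → α → Prop) (a : α) : Finset α :=
  Finset.univ.filter (fun b => N a b)

noncomputable def frac [Fintype α] (N : α → α → Prop) (B : Finset α) (a : α) : ℝ :=
  ((nbhd N a ∩ B).card : ℝ) / ((nbhd N a).card : ℝ)

/-- Postconditions of action-model states: `B`, `¬B`, or `⊤` (no change). -/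
inductive Post where
  | B : Post
  | notB : Post
  | top : Post
deriving DecidableEq

/-- An action model over agents `α` with states `S`: a relation, and for each
state a precondition (given by its extension, a set of agents) and a
postcondition. -/
structure ActionModel (α : Type*) (S : Type*) where
  R : S → S → Prop
  pre : S → Finset α
  post : S → Post

/-- Membership of a product-update pair `(a,σ)` in the updated behavior set
`B↑`. -/
def BUp (E : ActionModel α S) (B : Finset α) (a : α) (σ : S) : Prop :=
  (a ∈ B ∧ E.post σ ≠ Post.notB) ∨ E.post σ = Post.B

noncomputable def equivSubtypeProdOfExistsUnique {S : Type*} {P : α → S → Prop}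
    (h : ∀ a, ∃! σ, P a σ) : α ≃ {p : α × S // P p.1 p.2} where
  toFun a := ⟨(a, (h a).exists.choose), (h a).exists.choose_spec⟩
  invFun p := p.1.1
  left_inv _ := rfl
  right_inv := by
    rintro ⟨⟨a, σ⟩, hσ⟩
    have hσ_eq : (h a).exists.choose = σ := (h a).unique (h a).exists.choose_spec hσ
    simp only [hσ_eq]

theorem product_network_isomorphic_general {S : Type*} (N : α → α → Prop)
    (E : ActionModel α S)
    (hfull : ∀ σ σ', E.R σ σ')
    (hpart : ∀ a, ∃! σ, a ∈ E.pre σ) :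
    ∃ f : α → {p : α × S // p.1 ∈ E.pre p.2},
      Function.Bijective f ∧ (∀ a, (f a).1.1 = a) ∧
      ∀ a b, N a b ↔ (N (f a).1.1 (f b).1.1 ∧ E.R (f a).1.2 (f b).1.2) :=
  ⟨equivSubtypeProdOfExistsUnique hpart, (equivSubtypeProdOfExistsUnique hpart).bijective,
    fun _ => rfl, fun _ _ => ⟨fun hN => ⟨hN, hfull _ _⟩, And.left⟩⟩

/-- if the preconditions of `E` partition the agent set and `R`
is the full relation, then `M ⊗ E` is network-isomorphic to `M` via
`a ↦ (a, σ_a)`. -/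
theorem product_network_isomorphic {S : Type*} [Fintype α] (N : α → α → Prop)
    (hirr : ∀ a, ¬ N a a) (hsym : ∀ a b, N a b → N b a)
    (θ : ℝ) (hθ0 : 0 ≤ θ) (hθ1 : θ ≤ 1) (B : Finset α)
    (E : ActionModel α S)
    (hfull : ∀ σ σ', E.R σ σ')
    (hpart : ∀ a, ∃! σ, a ∈ E.pre σ) :
    ∃ f : α → {p : α × S // p.1 ∈ E.pre p.2},
      Function.Bijective f ∧ (∀ a, (f a).1.1 = a) ∧
      ∀ a b, N a b ↔ (N (f a).1.1 (f b).1.1 ∧ E.R (f a).1.2 (f b).1.2) :=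
  product_network_isomorphic_general N E hfull hpart
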